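/- Homomorphisms reflect reductions: if f is a homomorphism and (f α, σ) reduces in one step to (β', σ'), then either α is a value, or there exists β such that (α, σ) reduces in one step to (β, σ') and f β = β'. -/

import Mathlib

/-- Computations with values, errors, delays, and effect nodes. -/
inductive Comp (V E : Type) (I : Type) (A B : I → Type) : Type where
  | val : V → Comp V E I A B
  | err : E → Comp V E I A B
  | tick : Comp V E I A B → Comp V E I A B
  | vis : (i : I) → A i → (B i → Comp V E I A B) → Comp V E I A B

variable {V E I S : Type} {A B : I → Type}

/-- `f` is a homomorphism: it commutes with `Err`, `Tick` and `Vis`. -/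
def IsHom (f : Comp V E I A B → Comp V E I A B) : Prop :=
  (∀ e, f (Comp.err e) = Comp.err e) ∧
  (∀ α, f (Comp.tick α) = Comp.tick (f α)) ∧
  (∀ i x k, f (Comp.vis i x k) = Comp.vis i x (fun y => f (k y)))

/-- One-step reduction on configurations, given a reifier `r`: unfold a `Tick`,
or reify a `Vis` node using `r`. -/
inductive Step (r : ∀ i, A i × S → Option (B i × S)) :
    Comp V E I A B × S → Comp V E I A B × S → Prop where
  | tick (β : Comp V E I A B) (σ : S) : Step r (Comp.tick β, σ) (β, σ)
  | vis (i : I) (x : A i) (k : B i → Comp V E I A B) (y : B i) (σ σ' : S) :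
      r i (x, σ) = some (y, σ') → Step r (Comp.vis i x k, σ) (k y, σ')

namespace Step

variable {r : ∀ i, A i × S → Option (B i × S)}

theorem not_err {e : E} {σ : S} {c : Comp V E I A B × S} :
    ¬ Step r (Comp.err e, σ) c := by
  rintro ⟨⟩

theorem tick_iff {α β : Comp V E I A B} {σ σ' : S} :
    Step r (Comp.tick α, σ) (β, σ') ↔ β = α ∧ σ' = σ := by
  constructor
  · rintro ⟨⟩
    exact ⟨rfl, rfl⟩
  · rintro ⟨rfl, rfl⟩
    exact .tick _ _

theorem vis_iff {i : I} {x : A i} {k : B i → Comp V E I A B} {β : Comp V E I A B}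
    {σ σ' : S} :
    Step r (Comp.vis i x k, σ) (β, σ') ↔ ∃ y, r i (x, σ) = some (y, σ') ∧ β = k y := by
  constructor
  · rintro ⟨⟩
    exact ⟨_, by assumption, rfl⟩
  · rintro ⟨y, hr, rfl⟩
    exact .vis i x k y σ σ' hr

end Step

/-- Homomorphisms reflect reductions: if `f` is a homomorphism and
`(f α, σ) ↝ (β', σ')`, then either `α` is a value, or there is `β` with
`(α, σ) ↝ (β, σ')` and `f β = β'`. -/
theorem hom_reflects_step (r : ∀ i, A i × S → Option (B i × S))
    (f : Comp V E I A B → Comp V E I A B) (hf : IsHom f)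
    (α β' : Comp V E I A B) (σ σ' : S)
    (h : Step r (f α, σ) (β', σ')) :
    (∃ v : V, α = Comp.val v) ∨
    ∃ β, Step r (α, σ) (β, σ') ∧ f β = β' := by
  obtain ⟨hf_err, hf_tick, hf_vis⟩ := hf
  cases α with
  | val v => exact Or.inl ⟨v, rfl⟩
  | err e =>
    rw [hf_err] at h
    exact absurd h Step.not_err
  | tick α =>
    rw [hf_tick, Step.tick_iff] at h
    obtain ⟨rfl, rfl⟩ := h
    exact Or.inr ⟨α, .tick _ _, rfl⟩
  | vis i x k =>
    rw [hf_vis, Step.vis_iff] at h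
    obtain ⟨y, hr, rfl⟩ := h
    exact Or.inr ⟨k y, .vis i x k y σ σ' hr, rfl⟩
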